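/- Let ℓ : Mat(n,n) → Mat(n,n) send a matrix to its lower-triangular part (zeroing the strictly upper triangular entries), and define the inner product on gl(n,ℝ) by ⟨u,v⟩ = tr(ℓ(u)^T ℓ(v)) + tr((u+u^T)(v+v^T)). Then the orthogonal complement of the Lie algebra so(n) of skew-symmetric matrices with respect to this inner product is the space upp(n) of upper triangular matrices (diagonal included), i.e., { u ∈ gl(n) : the strictly lower triangular part of u vanishes }. -/

import Mathlib

open Matrix

/-- The lower-triangular part map `ℓ`. -/
def lowerPart {n : ℕ} (U : Matrix (Fin n) (Fin n) ℝ) : Matrix (Fin n) (Fin n) ℝ :=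
  Matrix.of fun i j => if j ≤ i then U i j else 0

/-- The QR inner product `⟨u,v⟩ = tr(ℓ(u)ᵀ ℓ(v)) + tr((u+uᵀ)(v+vᵀ))` on `gl(n,ℝ)`. -/
def qrInner {n : ℕ} (u v : Matrix (Fin n) (Fin n) ℝ) : ℝ :=
  Matrix.trace ((lowerPart u)ᵀ * lowerPart v) + Matrix.trace ((u + uᵀ) * (v + vᵀ))

/-- The orthogonal complement of `so(n)` with respect to the QR inner product is
precisely the space of upper triangular matrices. -/
theorem stmt11 (n : ℕ) (u : Matrix (Fin n) (Fin n) ℝ) :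
    (∀ ξ : Matrix (Fin n) (Fin n) ℝ, ξᵀ = -ξ → qrInner ξ u = 0)
      ↔ (∀ i j : Fin n, j < i → u i j = 0) := by
  constructor
  · intro h i j hji
    have hne : (i : Fin n) ≠ j := hji.ne'
    set ξ : Matrix (Fin n) (Fin n) ℝ := Matrix.of fun a b =>
      if a = i ∧ b = j then 1 else if a = j ∧ b = i then -1 else 0 with hξ
    have hskew : ξᵀ = -ξ := by
      ext a b
      simp only [transpose_apply, Matrix.neg_apply, hξ, Matrix.of_apply]
      split_ifs <;> simp_all
    have hz : ξ + ξᵀ = 0 := by rw [hskew, add_neg_cancel]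
    have h0 := h ξ hskew
    unfold qrInner at h0
    rw [hz, Matrix.zero_mul, Matrix.trace_zero, add_zero] at h0
    have key : Matrix.trace ((lowerPart ξ)ᵀ * lowerPart u) = u i j := by
      rw [Matrix.trace]
      simp only [Matrix.diag, Matrix.mul_apply, transpose_apply, lowerPart, Matrix.of_apply]
      rw [Finset.sum_eq_single j]
      · rw [Finset.sum_eq_single i]
        · simp [hξ, hji.le, hne]
        · intro k _ hk
          simp only [hξ, Matrix.of_apply]
          split_ifs <;> simp_all
        · simp
      · intro a _ ha
        apply Finset.sum_eq_zero
        intro k _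
        simp only [hξ, Matrix.of_apply]
        by_cases hle : a ≤ k
        · simp only [if_pos hle]
          rcases eq_or_ne k i with rfl | hki
          · simp [ha, hne]
          · rcases eq_or_ne k j with rfl | hkj
            · by_cases hai : a = i
              · subst hai; exact absurd hle (not_le.mpr hji)
              · simp [hki, hai]
            · simp [hki, hkj]
        · simp [hle]
      · simp
    rw [key] at h0
    exact h0
  · intro h ξ hskew
    have hz : ξ + ξᵀ = 0 := by rw [hskew, add_neg_cancel]
    unfold qrInner
    rw [hz, Matrix.zero_mul, Matrix.trace_zero, add_zero]
    rw [Matrix.trace]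
    simp only [Matrix.diag, Matrix.mul_apply, transpose_apply, lowerPart, Matrix.of_apply]
    apply Finset.sum_eq_zero
    intro a _
    apply Finset.sum_eq_zero
    intro k _
    by_cases hle : a ≤ k
    · rcases lt_or_eq_of_le hle with hlt | rfl
      · simp [hle, h k a hlt]
      · have hdiag : ξ a a = 0 := by
          have := congrFun (congrFun hskew a) a
          simp only [transpose_apply, Matrix.neg_apply] at this
          linarith
        simp [hdiag]
    · simp [hle]
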